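/- Let φ : 𝔻 → 𝔻 be a nonconstant holomorphic function and ψ : 𝔻 → ℂ holomorphic with |ψ(w)| ≤ 1 for all w ∈ 𝔻, such that φ(z) = z·ψ(φ(z)) for all z ∈ 𝔻. Then φ is injective. -/

import Mathlib

/-!
Two points with the same image `w` give `(z₁ - z₂) * ψ w = 0`, so `ψ w = 0`, hence `w = 0` and
`ψ 0 = 0`. By the Schwarz lemma `‖ψ w‖ ≤ ‖w‖`, so every value satisfies
`‖φ z‖ ≤ ‖z‖ * ‖φ z‖` and `φ` vanishes identically.
-/

open Metric

theorem eq_zero_of_eq_mul_apply_of_mapsTo_ball {ψ : ℂ → ℂ} {R : ℝ}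
    (hψ : DifferentiableOn ℂ ψ (ball 0 R)) (hψmaps : Set.MapsTo ψ (ball 0 R) (closedBall 0 R))
    (hψ0 : ψ 0 = 0) {z w : ℂ} (hz : ‖z‖ < 1) (hw : ‖w‖ < R) (h : w = z * ψ w) : w = 0 := by
  have hschwarz : ‖ψ w‖ ≤ ‖w‖ := Complex.norm_le_norm_of_mapsTo_ball hψ hψmaps hψ0 hw
  have hle : ‖w‖ ≤ ‖z‖ * ‖w‖ :=
    calc ‖w‖ = ‖z‖ * ‖ψ w‖ := by rw [← norm_mul, ← h]
      _ ≤ ‖z‖ * ‖w‖ := by gcongr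
  have : ‖w‖ = 0 := by nlinarith [norm_nonneg w]
  exact norm_eq_zero.1 this

theorem chu_equation_injective_general
    (φ ψ : ℂ → ℂ)
    (hψ : DifferentiableOn ℂ ψ (ball (0 : ℂ) 1))
    (hφmaps : ∀ z ∈ ball (0 : ℂ) 1, φ z ∈ ball (0 : ℂ) 1)
    (hψb : ∀ w ∈ ball (0 : ℂ) 1, ‖ψ w‖ ≤ 1)
    (hnc : ¬ ∃ c : ℂ, ∀ z ∈ ball (0 : ℂ) 1, φ z = c)
    (hfe : ∀ z ∈ ball (0 : ℂ) 1, φ z = z * ψ (φ z)) :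
    Set.InjOn φ (ball (0 : ℂ) 1) := by
  intro z₁ hz₁ z₂ hz₂ heq
  by_contra hne
  have hψw : ψ (φ z₁) = 0 := by
    refine (mul_eq_mul_right_iff.1 ?_).resolve_left hne
    rw [← hfe z₁ hz₁, heq, ← hfe z₂ hz₂]
  have hψ0 : ψ 0 = 0 := by
    have hw0 : φ z₁ = 0 := by rw [hfe z₁ hz₁, hψw, mul_zero]
    rwa [hw0] at hψw
  have hψmaps : Set.MapsTo ψ (ball 0 1) (closedBall 0 1) := fun w hw ↦
    mem_closedBall_zero_iff.2 (hψb w hw)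
  exact hnc ⟨0, fun z hz ↦ eq_zero_of_eq_mul_apply_of_mapsTo_ball hψ hψmaps hψ0
    (mem_ball_zero_iff.1 hz) (mem_ball_zero_iff.1 (hφmaps z hz)) (hfe z hz)⟩

theorem chu_equation_injective
    (φ ψ : ℂ → ℂ)
    (hφ : DifferentiableOn ℂ φ (ball (0 : ℂ) 1))
    (hψ : DifferentiableOn ℂ ψ (ball (0 : ℂ) 1))
    (hφmaps : ∀ z ∈ ball (0 : ℂ) 1, φ z ∈ ball (0 : ℂ) 1)
    (hψb : ∀ w ∈ ball (0 : ℂ) 1, ‖ψ w‖ ≤ 1)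
    (hnc : ¬ ∃ c : ℂ, ∀ z ∈ ball (0 : ℂ) 1, φ z = c)
    (hfe : ∀ z ∈ ball (0 : ℂ) 1, φ z = z * ψ (φ z)) :
    Set.InjOn φ (ball (0 : ℂ) 1) :=
  chu_equation_injective_general φ ψ hψ hφmaps hψb hnc hfe
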